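/- Fix a positive integer n. Let k be a positive integer and let u_1,…,u_{k−1} ∈ M be monomials such that each u_i either lies in yZ ∩ Zy or equals y. Then the ℤ-linear map on Z(k) defined on monomials by [a_1,…,a_k] ↦ x^{a_1} u_1 x^{a_2} u_2 x^{a_3} ⋯ u_{k−1} x^{a_k} maps B ∩ Z(k) into B. -/

import Mathlib

/-!
The free non-unital associative ring `Z = ℤ⟨x,y⟩⁺`, realized as the span of the
non-empty monomials inside the free (unital) algebra `W = ℤ⟨x,y⟩`, together with the
`ℤ`-submodule `B` from Section 3 of the paper.
-/

/-- The free unital associative `ℤ`-algebra `W = ℤ⟨x,y⟩` on two generators. -/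
abbrev W : Type := FreeAlgebra ℤ (Fin 2)

/-- The generator `x`. -/
noncomputable def Xg : W := FreeAlgebra.ι ℤ (0 : Fin 2)

/-- The generator `y`. -/
noncomputable def Yg : W := FreeAlgebra.ι ℤ (1 : Fin 2)

/-- `w` is a non-empty monomial (word) in `x, y`, i.e. `w ∈ M`. -/
def IsMonoW (w : W) : Prop :=
  ∃ l : List (Fin 2), l ≠ [] ∧ w = (l.map (FreeAlgebra.ι ℤ)).prod

/-- `Z = ℤ⟨x,y⟩⁺`, the free non-unital associative ring on `x, y`: the `ℤ`-span of the
non-empty monomials inside `W`. -/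
noncomputable def Zsub : Submodule ℤ W := Submodule.span ℤ {w | IsMonoW w}

/-- `[a_1,…,a_k] = x^{a_1} y x^{a_2} y ⋯ y x^{a_k}` (for `k = 0` this is `1`). -/
noncomputable def br {k : ℕ} (a : Fin k → ℕ) : W :=
  (List.intersperse Yg (List.ofFn fun i => Xg ^ (a i))).prod

/-- The `ℤ`-submodule `B` of `Z`: it is generated by the monomials `[a_1,…,a_k]`
(`k ≥ 1`) such that `a_i ≥ n` for some `i`, or `a_i = a_j` for some `i ≠ j`, together
with the elements `[a_1,…,a_k] + [a_1,…,a_k]^{(ij)}` for transpositions `(ij)`,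
`i ≠ j`. -/
noncomputable def Bsub (n : ℕ) : Submodule ℤ W :=
  Submodule.span ℤ
    ({w | ∃ (k : ℕ) (a : Fin k → ℕ), 0 < k ∧
        ((∃ i, n ≤ a i) ∨ ∃ i j : Fin k, i ≠ j ∧ a i = a j) ∧ w = br a} ∪
      {w | ∃ (k : ℕ) (a : Fin k → ℕ) (i j : Fin k), i ≠ j ∧
        w = br a + br (a ∘ Equiv.swap i j)})

/-- `Z(k)`: the `ℤ`-span of the monomials whose total degree in `y` is `k−1`, i.e. of
the words `[a_1,…,a_k]`, `a ∈ ℕ₀^k`. -/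
noncomputable def Zk (k : ℕ) : Submodule ℤ W :=
  Submodule.span ℤ {w | ∃ a : Fin k → ℕ, w = br a}

/-- The alternating product `w_1 s_1 w_2 s_2 ⋯`: multiply the entries of the first list
interleaved with the entries of the second list (of separators). -/
noncomputable def interleave : List W → List W → W
  | [], _ => 1
  | w :: _, [] => w
  | w :: ws, s :: ss => w * s * interleave ws ss

/-- `x^{a_1} u_1 x^{a_2} u_2 ⋯ u_{k−1} x^{a_k}`. -/
noncomputable def altWord {k : ℕ} (a : Fin k → ℕ) (u : Fin (k - 1) → W) : W :=
  interleave (List.ofFn fun i => Xg ^ (a i)) (List.ofFn u)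

/-!
Each admissible separator `u_i` is a monomial `y x^{m_1} y ⋯ y x^{m_r} y` (possibly just `y`), so
`x^{a_1} u_1 x^{a_2} ⋯ u_{k-1} x^{a_k}` is again a bracket `[a_1, m^{(1)}, a_2, …, m^{(k-1)}, a_k]`,
in which `a_1, …, a_k` occupy fixed distinct positions and the other entries do not depend on `a`.
Such a substitution sends each kind of generator of `B` (a bracket with an entry `≥ n`, a bracket
with a repeated entry, a sum `[a] + [a]^{(ij)}`) to a generator of the same kind. The generators are
homogeneous in the `y`-degree, so projecting onto `y`-degree `k - 1` shows that `B ∩ Z(k)` is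
spanned by the generators with `k` entries.
-/

open FreeAlgebra

section FreeMonoidBasis

variable {R X : Type*} [CommSemiring R]

lemma equivMonoidAlgebraFreeMonoid_ι (x : X) :
    equivMonoidAlgebraFreeMonoid (ι R x) = MonoidAlgebra.single (FreeMonoid.of x) (1 : R) :=
  lift_ι_apply _ x

lemma equivMonoidAlgebraFreeMonoid_list_prod (l : List X) :
    equivMonoidAlgebraFreeMonoid (l.map (ι R)).prod =
      MonoidAlgebra.single (FreeMonoid.ofList l) (1 : R) := by
  induction l with
  | nil => exact map_one _
  | cons x t ih =>
    rw [List.map_cons, List.prod_cons, map_mul, ih, equivMonoidAlgebraFreeMonoid_ι,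
      MonoidAlgebra.single_mul_single, one_mul]
    rfl

lemma basisFreeMonoid_ofList (l : List X) :
    basisFreeMonoid R X (FreeMonoid.ofList l) = (l.map (ι R)).prod := by
  simp [basisFreeMonoid, ← equivMonoidAlgebraFreeMonoid_list_prod]

variable [Nontrivial R]

lemma exists_eq_cons_of_list_prod_eq_ι_mul {l : List X} {x : X} {z : FreeAlgebra R X}
    (h : (l.map (ι R)).prod = ι R x * z) : ∃ t, l = x :: t := by
  classical
  have hsupp := MonoidAlgebra.support_coeff_single_mul_subset
    (equivMonoidAlgebraFreeMonoid z) (1 : R) (FreeMonoid.of x)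
  rw [← equivMonoidAlgebraFreeMonoid_ι, ← map_mul, ← h,
    equivMonoidAlgebraFreeMonoid_list_prod] at hsupp
  obtain ⟨w, -, hw⟩ := Finset.mem_image.mp (hsupp (x := FreeMonoid.ofList l) (by simp))
  exact ⟨FreeMonoid.toList w, congrArg FreeMonoid.toList hw.symm⟩

lemma exists_eq_concat_of_list_prod_eq_mul_ι {l : List X} {x : X} {z : FreeAlgebra R X}
    (h : (l.map (ι R)).prod = z * ι R x) : ∃ t, l = t ++ [x] := by
  classical
  have hsupp := MonoidAlgebra.support_coeff_mul_single_subset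
    (equivMonoidAlgebraFreeMonoid z) (1 : R) (FreeMonoid.of x)
  rw [← equivMonoidAlgebraFreeMonoid_ι, ← map_mul, ← h,
    equivMonoidAlgebraFreeMonoid_list_prod] at hsupp
  obtain ⟨w, -, hw⟩ := Finset.mem_image.mp (hsupp (x := FreeMonoid.ofList l) (by simp))
  exact ⟨FreeMonoid.toList w, congrArg FreeMonoid.toList hw.symm⟩

end FreeMonoidBasis

noncomputable def brList (L : List ℕ) : W :=
  (List.intersperse Yg (L.map (Xg ^ ·))).prod

lemma br_eq_brList {k : ℕ} (a : Fin k → ℕ) : br a = brList (List.ofFn a) := by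
  simp [br, brList, List.map_ofFn, Function.comp_def]

@[simp] lemma brList_singleton (a : ℕ) : brList [a] = Xg ^ a := by simp [brList]

lemma brList_cons {L : List ℕ} (hL : L ≠ []) (a : ℕ) :
    brList (a :: L) = Xg ^ a * Yg * brList L := by
  obtain ⟨b, t, rfl⟩ := List.exists_cons_of_ne_nil hL
  simp [brList, List.intersperse_cons_cons, mul_assoc]

lemma brList_append {L₁ L₂ : List ℕ} (h₁ : L₁ ≠ []) (h₂ : L₂ ≠ []) :
    brList (L₁ ++ L₂) = brList L₁ * Yg * brList L₂ := by
  induction L₁ with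
  | nil => exact absurd rfl h₁
  | cons a t ih =>
    rcases eq_or_ne t [] with rfl | ht
    · simp [brList_cons h₂]
    · rw [List.cons_append, brList_cons (by simp [ht]), brList_cons ht, ih ht]
      simp only [mul_assoc]

lemma pow_mul_brList_cons (a b : ℕ) (L : List ℕ) :
    Xg ^ a * brList (b :: L) = brList ((a + b) :: L) := by
  rcases eq_or_ne L [] with rfl | hL
  · simp [pow_add]
  · simp [brList_cons hL, pow_add, mul_assoc]

lemma exists_brList_eq_prod : ∀ l : List (Fin 2),
    ∃ L ≠ [], (l.map (ι ℤ)).prod = brList L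
  | [] => ⟨[0], by simp⟩
  | c :: t => by
    obtain ⟨L, hL, h⟩ := exists_brList_eq_prod t
    obtain ⟨b, r, rfl⟩ := List.exists_cons_of_ne_nil hL
    fin_cases c
    · refine ⟨(1 + b) :: r, by simp, ?_⟩
      rw [← pow_mul_brList_cons, ← h, pow_one]
      rfl
    · refine ⟨0 :: b :: r, by simp, ?_⟩
      rw [brList_cons hL, pow_zero, one_mul, ← h]
      rfl

lemma exists_prod_eq_brList : ∀ L : List ℕ, L ≠ [] →
    ∃ l : List (Fin 2), brList L = (l.map (ι ℤ)).prod ∧ l.count 1 = L.length - 1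
  | [], h => absurd rfl h
  | [a], _ =>
    ⟨List.replicate a 0, by simp [List.map_replicate, Xg], by simp [List.count_replicate]⟩
  | a :: b :: t, _ => by
    obtain ⟨l, hl, hc⟩ := exists_prod_eq_brList (b :: t) (by simp)
    refine ⟨List.replicate a 0 ++ 1 :: l, ?_, ?_⟩
    · simp [brList_cons, hl, List.map_replicate, Xg, Yg, mul_assoc]
    · simp [List.count_replicate, hc]

lemma exists_brList_eq_of_isMonoW {v : W} (hv : IsMonoW v) (hl : ∃ z, v = Yg * z)
    (hr : ∃ z, v = z * Yg) : ∃ m : List ℕ, v = brList (0 :: (m ++ [0])) := by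
  obtain ⟨l, -, rfl⟩ := hv
  obtain ⟨z, hz⟩ := hl
  obtain ⟨z', hz'⟩ := hr
  obtain ⟨t, rfl⟩ := exists_eq_cons_of_list_prod_eq_ι_mul hz
  obtain ⟨s, hs⟩ := exists_eq_concat_of_list_prod_eq_mul_ι hz'
  cases s with
  | nil => exact ⟨[], by simp_all [brList_cons, Yg]⟩
  | cons c s' =>
    obtain ⟨-, rfl⟩ := List.cons_eq_cons.mp hs
    obtain ⟨L, hL, hsL⟩ := exists_brList_eq_prod s'
    refine ⟨L, ?_⟩
    simp [brList_cons, brList_append hL, hsL, Yg]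

noncomputable def yDegProj (d : ℕ) : W →ₗ[ℤ] W :=
  (basisFreeMonoid ℤ (Fin 2)).constr ℤ fun w =>
    if (FreeMonoid.toList w).count 1 = d then basisFreeMonoid ℤ (Fin 2) w else 0

lemma yDegProj_list_prod (d : ℕ) (l : List (Fin 2)) :
    yDegProj d (l.map (ι ℤ)).prod = if l.count 1 = d then (l.map (ι ℤ)).prod else 0 := by
  rw [← basisFreeMonoid_ofList]
  exact (basisFreeMonoid ℤ (Fin 2)).constr_basis ℤ _ _

lemma yDegProj_brList (d : ℕ) {L : List ℕ} (hL : L ≠ []) :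
    yDegProj d (brList L) = if L.length - 1 = d then brList L else 0 := by
  obtain ⟨l, hl, hc⟩ := exists_prod_eq_brList L hL
  rw [hl, yDegProj_list_prod, hc]

lemma yDegProj_br {k k' : ℕ} (hk : 0 < k) (hk' : 0 < k') (a : Fin k' → ℕ) :
    yDegProj (k - 1) (br a) = if k' = k then br a else 0 := by
  rw [br_eq_brList, yDegProj_brList _ (by simpa [List.ofFn_eq_nil_iff] using hk'.ne'),
    List.length_ofFn]
  simp only [show k' - 1 = k - 1 ↔ k' = k by omega]

lemma yDegProj_of_mem_Zk {k : ℕ} (hk : 0 < k) {w : W} (hw : w ∈ Zk k) :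
    yDegProj (k - 1) w = w := by
  have : Zk k ≤ LinearMap.eqLocus (yDegProj (k - 1)) LinearMap.id :=
    Submodule.span_le.2 <| by rintro _ ⟨a, rfl⟩; simp [yDegProj_br hk hk]
  exact this hw

section Bsub

variable {n k : ℕ}

lemma br_mem_Bsub_of_le {a : Fin k → ℕ} {i : Fin k} (h : n ≤ a i) : br a ∈ Bsub n :=
  Submodule.subset_span (Or.inl ⟨k, a, i.pos, Or.inl ⟨i, h⟩, rfl⟩)

lemma br_mem_Bsub_of_eq {a : Fin k → ℕ} {i j : Fin k} (hij : i ≠ j) (h : a i = a j) :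
    br a ∈ Bsub n :=
  Submodule.subset_span (Or.inl ⟨k, a, i.pos, Or.inr ⟨i, j, hij, h⟩, rfl⟩)

lemma br_add_br_comp_swap_mem_Bsub (a : Fin k → ℕ) {i j : Fin k} (hij : i ≠ j) :
    br a + br (a ∘ Equiv.swap i j) ∈ Bsub n :=
  Submodule.subset_span (Or.inr ⟨k, a, i, j, hij, rfl⟩)

end Bsub

/-- `f P = Sum.inl c` fixes the exponent `c` at position `P`, while `f P = Sum.inr i` reserves
position `P` for `a i`; thus `br (Sum.elim id a ∘ f)` is the bracket obtained by filling `a` into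
the template `f`. -/
def IsTemplate {N k : ℕ} (f : Fin N → ℕ ⊕ Fin k) : Prop :=
  ∀ i, ∃! P, f P = Sum.inr i

/-- The template of `x ^ a 0 * [0, c, 0] * w`, where `w` is `f` filled with `a 1, a 2, …`. -/
def consTemplate {r N k : ℕ} (c : Fin r → ℕ) (f : Fin N → ℕ ⊕ Fin k) :
    Fin (r + N + 1) → ℕ ⊕ Fin (k + 1) :=
  Fin.cons (Sum.inr 0) (Fin.append (Sum.inl ∘ c) (Sum.map id Fin.succ ∘ f))

lemma isTemplate_const : IsTemplate (fun _ : Fin 1 => (Sum.inr 0 : ℕ ⊕ Fin 1)) := fun i =>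
  ⟨0, by simp [Subsingleton.elim i 0], fun P _ => Subsingleton.elim P 0⟩

namespace IsTemplate

variable {N k : ℕ} {f : Fin N → ℕ ⊕ Fin k}

lemma cons {r : ℕ} (c : Fin r → ℕ) (hf : IsTemplate f) :
    IsTemplate (consTemplate c f) := by
  intro i
  unfold consTemplate
  induction i using Fin.cases with
  | zero =>
    refine ⟨0, rfl, fun P hP => ?_⟩
    induction P using Fin.cases with
    | zero => rfl
    | succ P =>
      induction P using Fin.addCases with
      | left P => simp at hP
      | right P => cases hfP : f P <;> simp [hfP] at hP
  | succ i =>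
    obtain ⟨P₀, hP₀, huniq⟩ := hf i
    refine ⟨(Fin.natAdd r P₀).succ, by simp [hP₀], fun P hP => ?_⟩
    induction P using Fin.cases with
    | zero => exact absurd (Sum.inr_injective hP).symm (Fin.succ_ne_zero i)
    | succ P =>
      induction P using Fin.addCases with
      | left P => simp at hP
      | right P =>
        rcases hfP : f P with c' | l
        · simp [hfP] at hP
        · simp only [Fin.cons_succ, Fin.append_right, Function.comp_apply, hfP, Sum.map_inr,
            Sum.inr.injEq, Fin.succ_inj] at hP
          rw [huniq P (hfP.trans (congrArg _ hP))]

lemma elim_comp_swap (hf : IsTemplate f) (a : Fin k → ℕ) {i j : Fin k} {P Q : Fin N}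
    (hP : f P = Sum.inr i) (hQ : f Q = Sum.inr j) :
    Sum.elim id (a ∘ Equiv.swap i j) ∘ f = Sum.elim id a ∘ f ∘ Equiv.swap P Q := by
  funext r
  by_cases hrP : r = P
  · simp [hrP, hP, hQ]
  by_cases hrQ : r = Q
  · simp [hrQ, hP, hQ]
  have hri : f r ≠ Sum.inr i := fun h => hrP ((hf i).unique h hP)
  have hrj : f r ≠ Sum.inr j := fun h => hrQ ((hf j).unique h hQ)
  rcases hr : f r with c | l
  · simp [hr, Equiv.swap_apply_of_ne_of_ne hrP hrQ]
  · have hli : l ≠ i := by rintro rfl; exact hri hr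
    have hlj : l ≠ j := by rintro rfl; exact hrj hr
    simp [hr, Equiv.swap_apply_of_ne_of_ne hrP hrQ, Equiv.swap_apply_of_ne_of_ne hli hlj]

lemma br_elim_comp_mem_Bsub {n : ℕ} (hf : IsTemplate f) {a : Fin k → ℕ}
    (h : (∃ i, n ≤ a i) ∨ ∃ i j, i ≠ j ∧ a i = a j) : br (Sum.elim id a ∘ f) ∈ Bsub n := by
  rcases h with ⟨i, hi⟩ | ⟨i, j, hij, hij'⟩
  · obtain ⟨P, hP, -⟩ := hf i
    exact br_mem_Bsub_of_le (i := P) (by simpa [hP] using hi)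
  · obtain ⟨P, hP, -⟩ := hf i
    obtain ⟨Q, hQ, -⟩ := hf j
    refine br_mem_Bsub_of_eq (i := P) (j := Q) ?_ (by simpa [hP, hQ] using hij')
    rintro rfl
    exact hij (Sum.inr_injective (hP.symm.trans hQ))

lemma br_elim_comp_add_swap_mem_Bsub {n : ℕ} (hf : IsTemplate f) (a : Fin k → ℕ)
    {i j : Fin k} (hij : i ≠ j) :
    br (Sum.elim id a ∘ f) + br (Sum.elim id (a ∘ Equiv.swap i j) ∘ f) ∈ Bsub n := by
  obtain ⟨P, hP, -⟩ := hf i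
  obtain ⟨Q, hQ, -⟩ := hf j
  rw [hf.elim_comp_swap a hP hQ]
  refine br_add_br_comp_swap_mem_Bsub _ ?_
  rintro rfl
  exact hij (Sum.inr_injective (hP.symm.trans hQ))

theorem apply_mem_Bsub {n : ℕ} (hf : IsTemplate f) (hk : 0 < k) (T : W →ₗ[ℤ] W)
    (hT : ∀ a, T (br a) = br (Sum.elim id a ∘ f)) : ∀ w ∈ Bsub n ⊓ Zk k, T w ∈ Bsub n := by
  have hB : Bsub n ≤ (Bsub n).comap (T ∘ₗ yDegProj (k - 1)) := by
    refine Submodule.span_le.2 ?_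
    rintro _ (⟨k', a, hk', hcond, rfl⟩ | ⟨k', a, i, j, hij, rfl⟩)
    · simp only [SetLike.mem_coe, Submodule.mem_comap, LinearMap.comp_apply,
        yDegProj_br hk hk']
      split_ifs with hkk
      · subst hkk
        rw [hT]
        exact hf.br_elim_comp_mem_Bsub hcond
      · simp
    · simp only [SetLike.mem_coe, Submodule.mem_comap, LinearMap.comp_apply, map_add,
        yDegProj_br hk i.pos]
      split_ifs with hkk
      · subst hkk
        rw [hT, hT]
        exact hf.br_elim_comp_add_swap_mem_Bsub a hij
      · simp
  rintro w ⟨hwB, hwZ⟩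
  simpa [yDegProj_of_mem_Zk hk hwZ] using hB hwB

end IsTemplate

lemma elim_comp_consTemplate {r N k : ℕ} (c : Fin r → ℕ) (f : Fin N → ℕ ⊕ Fin k)
    (a : Fin (k + 1) → ℕ) :
    Sum.elim id a ∘ consTemplate c f =
      Fin.cons (a 0) (Fin.append c (Sum.elim id (Fin.tail a) ∘ f)) := by
  funext P
  unfold consTemplate
  refine Fin.cases rfl (fun P => ?_) P
  refine Fin.addCases (fun P => ?_) (fun P => ?_) P
  · simp
  · simp only [Fin.cons_succ, Fin.append_right, Function.comp_apply]
    cases f P <;> rfl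

lemma pow_mul_brList_mul_br (b : ℕ) (m : List ℕ) {N : ℕ} (g : Fin (N + 1) → ℕ) :
    Xg ^ b * brList (0 :: (m ++ [0])) * br g = br (Fin.cons b (Fin.append m.get g)) := by
  rw [br_eq_brList, br_eq_brList, List.ofFn_cons, List.ofFn_fin_append, List.ofFn_get,
    pow_mul_brList_cons, add_zero, ← List.cons_append,
    brList_append (by simp) (by simp), brList_singleton, pow_zero, mul_one,
    ← brList_append (by simp) (by simp)]
  rfl

lemma altWord_of_fin_one (a : Fin 1 → ℕ) (u : Fin 0 → W) : altWord a u = br a := by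
  simp [altWord, br, interleave]

lemma altWord_succ {j : ℕ} (a : Fin (j + 2) → ℕ) (u : Fin (j + 1) → W) :
    altWord a u = Xg ^ a 0 * u 0 * altWord (Fin.tail a) (Fin.tail u) := by
  rw [altWord, List.ofFn_succ]
  exact congrArg (interleave _) (List.ofFn_succ (f := u))

lemma exists_isTemplate_altWord_eq : ∀ (j : ℕ) (u : Fin j → W),
    (∀ i, ∃ m, u i = brList (0 :: (m ++ [0]))) →
    ∃ (N : ℕ) (f : Fin (N + 1) → ℕ ⊕ Fin (j + 1)),
      IsTemplate f ∧ ∀ a, altWord a u = br (Sum.elim id a ∘ f)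
  | 0, u, _ => ⟨0, _, isTemplate_const, fun a => by
      rw [altWord_of_fin_one]
      congr
      funext P
      fin_cases P
      rfl⟩
  | j + 1, u, hu => by
    obtain ⟨N, f, hf, hfill⟩ := exists_isTemplate_altWord_eq j (Fin.tail u) fun i => hu i.succ
    obtain ⟨m, hm⟩ := hu 0
    refine ⟨m.length + N + 1, _, hf.cons m.get, fun a => ?_⟩
    rw [altWord_succ, hfill, hm, pow_mul_brList_mul_br, elim_comp_consTemplate]

theorem B_image_under_substitution_general (n : ℕ) (k : ℕ) (hk : 0 < k)
    (u : Fin (k - 1) → W)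
    (hu : ∀ i, IsMonoW (u i) ∧
      (u i = Yg ∨ ((∃ z ∈ Zsub, u i = Yg * z) ∧ ∃ z ∈ Zsub, u i = z * Yg)))
    (T : W →ₗ[ℤ] W) (hT : ∀ a : Fin k → ℕ, T (br a) = altWord a u) :
    ∀ w ∈ Bsub n ⊓ Zk k, T w ∈ Bsub n := by
  have hsep : ∀ i, ∃ m, u i = brList (0 :: (m ++ [0])) := by
    intro i
    obtain ⟨hmono, hy | ⟨⟨z, -, hz⟩, ⟨z', -, hz'⟩⟩⟩ := hu i
    · exact ⟨[], by simp [hy, brList_cons]⟩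
    · exact exists_brList_eq_of_isMonoW hmono ⟨z, hz⟩ ⟨z', hz'⟩
  obtain ⟨j, rfl⟩ : ∃ j, k = j + 1 := ⟨k - 1, by omega⟩
  obtain ⟨N, f, hf, hfill⟩ := exists_isTemplate_altWord_eq j u hsep
  exact hf.apply_mem_Bsub hk T fun a => (hT a).trans (hfill a)

/-- **Lemma 2 (iii)**: let `k ≥ 1` and let `u_1,…,u_{k−1} ∈ M` be monomials with
`u_i ∈ yZ ∩ Zy` or `u_i = y`.  Then any `ℤ`-linear map `T` with
`T([a_1,…,a_k]) = x^{a_1} u_1 x^{a_2} u_2 ⋯ u_{k−1} x^{a_k}` maps `B ∩ Z(k)` into `B`. -/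
theorem B_image_under_substitution (n : ℕ) (hn : 0 < n) (k : ℕ) (hk : 0 < k)
    (u : Fin (k - 1) → W)
    (hu : ∀ i, IsMonoW (u i) ∧
      (u i = Yg ∨ ((∃ z ∈ Zsub, u i = Yg * z) ∧ ∃ z ∈ Zsub, u i = z * Yg)))
    (T : W →ₗ[ℤ] W) (hT : ∀ a : Fin k → ℕ, T (br a) = altWord a u) :
    ∀ w ∈ Bsub n ⊓ Zk k, T w ∈ Bsub n :=
  B_image_under_substitution_general n k hk u hu T hT
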